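/- Let m ∈ ℕ, let M be a nonempty closed subset of ℝ^m, let p, q ∈ M and let c ≥ 0. If (γ_k, g_k), k ∈ ℕ, is a sequence of admissible paths from p to q in M with E(γ_k) ≤ c for every k, then there exist a subsequence (γ_{k_j}, g_{k_j}) and an admissible path (γ, g) from p to q in M such that γ_{k_j} → γ uniformly on [0,1] and E(γ) ≤ c. -/

import Mathlib

/-!
The derivatives `g_k` form a bounded sequence in the separable Hilbert space `L²([0,1], ℝ^m)`,
of norm at most `√c`, so by the sequential Banach–Alaoglu theorem a subsequence converges weakly
to some `g₀` with `‖g₀‖² ≤ c`. Pairing with the indicators of `(0, t]` shows that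
`γ_k t → p + ∫₀ᵗ g₀` for every `t`. By Cauchy–Schwarz, `‖γ_k y - γ_k x‖ ≤ √c · √|y - x|`, so the
`γ_k` are equicontinuous and the convergence is uniform on the compact `[0,1]`. The endpoint
condition and the constraint `γ₀ t ∈ M` pass to the pointwise limit because `M` is closed.
-/

open MeasureTheory Set Filter

/-- `(γ, g)` is an admissible path from `p` to `q` in `M ⊆ ℝ^m`:
`γ` is continuous on `[0,1]`, `g ∈ L²([0,1], ℝ^m)`,
`γ t = p + ∫₀ᵗ g` on `[0,1]`, `γ 1 = q` and `γ` stays in `M`. -/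
def IsAdmissiblePath {m : ℕ} (M : Set (EuclideanSpace ℝ (Fin m)))
    (p q : EuclideanSpace ℝ (Fin m))
    (γ g : ℝ → EuclideanSpace ℝ (Fin m)) : Prop :=
  ContinuousOn γ (Icc 0 1) ∧
  MemLp g 2 (volume.restrict (Icc (0:ℝ) 1)) ∧
  (∀ t ∈ Icc (0:ℝ) 1, γ t = p + ∫ s in (0:ℝ)..t, g s) ∧
  γ 1 = q ∧
  ∀ t ∈ Icc (0:ℝ) 1, γ t ∈ M

/-- The energy of an admissible path. -/
noncomputable def pathEnergy {m : ℕ} (g : ℝ → EuclideanSpace ℝ (Fin m)) : ℝ :=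
  ∫ s in Icc (0:ℝ) 1, ‖g s‖ ^ 2

open scoped Topology RealInnerProductSpace ENNReal

theorem exists_subseq_tendsto_inner {F : Type*} [NormedAddCommGroup F] [InnerProductSpace ℝ F]
    [CompleteSpace F] [TopologicalSpace.SeparableSpace F] {R : ℝ} {G : ℕ → F}
    (hG : ∀ k, ‖G k‖ ≤ R) :
    ∃ G₀ : F, ‖G₀‖ ≤ R ∧ ∃ φ : ℕ → ℕ, StrictMono φ ∧
      ∀ h : F, Tendsto (fun j => ⟪h, G (φ j)⟫) atTop (𝓝 ⟪h, G₀⟫) := by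
  let T := InnerProductSpace.toDual ℝ F
  have hmem : ∀ k, StrongDual.toWeakDual (T (G k)) ∈
      WeakDual.toStrongDual ⁻¹' Metric.closedBall 0 R := by simpa using hG
  obtain ⟨ℓ, hℓ, φ, hφ, hlim⟩ := WeakDual.isSeqCompact_closedBall ℝ F 0 R hmem
  refine ⟨T.symm (WeakDual.toStrongDual ℓ), by simpa using hℓ, φ, hφ, fun h => ?_⟩
  have hℓh := ((WeakDual.eval_continuous h).tendsto ℓ).comp hlim
  rw [real_inner_comm, InnerProductSpace.toDual_symm_apply]
  simpa [Function.comp_def, T, real_inner_comm h] using hℓh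

theorem EquicontinuousOn.tendstoUniformlyOn_of_tendsto {ι X α : Type*} [TopologicalSpace X]
    [UniformSpace α] {F : ι → X → α} {f : X → α} {l : Filter ι} {K : Set X}
    (hK : IsCompact K) (hF : EquicontinuousOn F K)
    (h : ∀ x ∈ K, Tendsto (fun i => F i x) l (𝓝 (f x))) : TendstoUniformlyOn F f l K := by
  have hpi : Tendsto ((⋃₀ {K}).domRestrict ∘ F) l (𝓝 ((⋃₀ {K}).domRestrict f)) :=
    tendsto_pi_nhds.2 fun x => h x (by simpa using x.2)
  have hunif :=
    (EquicontinuousOn.tendsto_uniformOnFun_iff_pi' (𝔖 := {K}) (by simpa) (by simpa) l f).2 hpi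
  rw [UniformOnFun.tendsto_iff_tendstoUniformlyOn] at hunif
  simpa [Function.comp_def] using hunif

theorem equicontinuousOn_of_continuity_modulus {ι β α : Type*} [PseudoMetricSpace β]
    [PseudoMetricSpace α] {S : Set β} (b : ℝ → ℝ) (b_lim : Tendsto b (𝓝 0) (𝓝 0))
    (F : ι → β → α) (H : ∀ x ∈ S, ∀ y ∈ S, ∀ i, dist (F i x) (F i y) ≤ b (dist x y)) :
    EquicontinuousOn F S :=
  (equicontinuous_restrict_iff F).1 <|
    Metric.equicontinuous_of_continuity_modulus b b_lim _ fun x y i => H x x.2 y y.2 i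

theorem tendsto_of_forall_inner_tendsto {ι E : Type*} [NormedAddCommGroup E]
    [InnerProductSpace ℝ E] [FiniteDimensional ℝ E] {l : Filter ι} {f : ι → E} {x : E}
    (h : ∀ v, Tendsto (fun i => ⟪v, f i⟫) l (𝓝 ⟪v, x⟫)) : Tendsto f l (𝓝 x) := by
  let b := stdOrthonormalBasis ℝ E
  have hf : f = fun i => ∑ n, ⟪b n, f i⟫ • b n := funext fun i => (b.sum_repr' (f i)).symm
  rw [hf, ← b.sum_repr' x]
  exact tendsto_finsetSum _ fun n _ => (h (b n)).smul_const (b n)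

section L2

variable {α E : Type*} {mα : MeasurableSpace α} {μ : Measure α} [NormedAddCommGroup E]
  [InnerProductSpace ℝ E]

theorem integral_norm_sq_eq_norm_sq (f : Lp E 2 μ) : ∫ a, ‖f a‖ ^ 2 ∂μ = ‖f‖ ^ 2 := by
  simp only [← real_inner_self_eq_norm_sq, L2.inner_def]

theorem norm_setIntegral_le_norm_mul_sqrt [CompleteSpace E] (f : Lp E 2 μ) {s : Set α}
    (hs : MeasurableSet s) (hμs : μ s ≠ ∞) : ‖∫ x in s, f x ∂μ‖ ≤ ‖f‖ * √(μ.real s) := by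
  set v := ∫ x in s, f x ∂μ
  have hnorm : ‖indicatorConstLp 2 hs hμs v‖ = ‖v‖ * √(μ.real s) := by
    rw [norm_indicatorConstLp two_ne_zero ENNReal.ofNat_ne_top, Real.sqrt_eq_rpow]
    norm_num
  have hcs : ‖v‖ * ‖v‖ ≤ ‖v‖ * (√(μ.real s) * ‖f‖) := by
    rw [← sq, ← real_inner_self_eq_norm_sq,
      ← L2.inner_indicatorConstLp_eq_inner_setIntegral ℝ hs hμs, ← mul_assoc, ← hnorm]
    exact real_inner_le_norm _ _
  rw [mul_comm ‖f‖]
  rcases (norm_nonneg v).eq_or_lt with hv | hv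
  · rw [← hv]
    positivity
  · exact le_of_mul_le_mul_left hcs hv

theorem tendsto_setIntegral_of_tendsto_inner [FiniteDimensional ℝ E] {ι : Type*} {l : Filter ι}
    {G : ι → Lp E 2 μ} {G₀ : Lp E 2 μ} (hG : ∀ h, Tendsto (fun i => ⟪h, G i⟫) l (𝓝 ⟪h, G₀⟫))
    {s : Set α} (hs : MeasurableSet s) (hμs : μ s ≠ ∞) :
    Tendsto (fun i => ∫ x in s, G i x ∂μ) l (𝓝 (∫ x in s, G₀ x ∂μ)) :=
  tendsto_of_forall_inner_tendsto fun v => by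
    simpa only [L2.inner_indicatorConstLp_eq_inner_setIntegral] using
      hG (indicatorConstLp 2 hs hμs v)

end L2

theorem intervalIntegral_eq_setIntegral_restrict_Icc {E : Type*} [NormedAddCommGroup E]
    [NormedSpace ℝ E] (g : ℝ → E) {a b x y : ℝ} (hax : a ≤ x) (hxy : x ≤ y) (hyb : y ≤ b) :
    ∫ s in x..y, g s = ∫ s in Ioc x y, g s ∂(volume.restrict (Icc a b)) := by
  rw [intervalIntegral.integral_of_le hxy, Measure.restrict_restrict measurableSet_Ioc,
    inter_eq_self_of_subset_left (Ioc_subset_Icc_self.trans (Icc_subset_Icc hax hyb))]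

section AdmissiblePath

variable {m : ℕ} {M : Set (EuclideanSpace ℝ (Fin m))} {p q : EuclideanSpace ℝ (Fin m)}
  {γ g : ℝ → EuclideanSpace ℝ (Fin m)}

theorem pathEnergy_eq_norm_toLp_sq (hg : MemLp g 2 (volume.restrict (Icc (0:ℝ) 1))) :
    pathEnergy g = ‖hg.toLp g‖ ^ 2 := by
  rw [← integral_norm_sq_eq_norm_sq, pathEnergy]
  exact integral_congr_ae (hg.coeFn_toLp.mono fun s hs => by simp only [hs])

namespace IsAdmissiblePath

theorem intervalIntegrable (h : IsAdmissiblePath M p q γ g) {x y : ℝ} (hx : x ∈ Icc (0:ℝ) 1)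
    (hy : y ∈ Icc (0:ℝ) 1) : IntervalIntegrable g volume x y :=
  (IntegrableOn.mono_set (h.2.1.integrable one_le_two) (uIcc_subset_Icc hx hy)).intervalIntegrable

theorem eq_add_setIntegral_toLp (h : IsAdmissiblePath M p q γ g) {t : ℝ}
    (ht : t ∈ Icc (0:ℝ) 1) :
    γ t = p + ∫ s in Ioc 0 t, h.2.1.toLp g s ∂(volume.restrict (Icc 0 1)) := by
  rw [h.2.2.1 t ht, intervalIntegral_eq_setIntegral_restrict_Icc g le_rfl ht.1 ht.2]
  exact congrArg (p + ·) (integral_congr_ae (ae_restrict_of_ae h.2.1.coeFn_toLp.symm))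

theorem sub_eq_intervalIntegral (h : IsAdmissiblePath M p q γ g) {x y : ℝ}
    (hx : x ∈ Icc (0:ℝ) 1) (hy : y ∈ Icc (0:ℝ) 1) : γ y - γ x = ∫ s in x..y, g s := by
  have h0 : (0:ℝ) ∈ Icc (0:ℝ) 1 := left_mem_Icc.2 zero_le_one
  rw [h.2.2.1 y hy, h.2.2.1 x hx, add_sub_add_left_eq_sub,
    intervalIntegral.integral_interval_sub_left (h.intervalIntegrable h0 hy)
      (h.intervalIntegrable h0 hx)]

theorem norm_sub_le_of_le (h : IsAdmissiblePath M p q γ g) {x y : ℝ} (hx : x ∈ Icc (0:ℝ) 1)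
    (hy : y ∈ Icc (0:ℝ) 1) (hxy : x ≤ y) : ‖γ y - γ x‖ ≤ √(pathEnergy g) * √(y - x) := by
  rw [h.sub_eq_intervalIntegral hx hy, pathEnergy_eq_norm_toLp_sq h.2.1,
    Real.sqrt_sq (norm_nonneg _), intervalIntegral_eq_setIntegral_restrict_Icc g hx.1 hxy hy.2,
    ← integral_congr_ae (ae_restrict_of_ae h.2.1.coeFn_toLp)]
  refine (norm_setIntegral_le_norm_mul_sqrt _ measurableSet_Ioc (measure_ne_top _ _)).trans ?_
  have hvol : (volume.restrict (Icc (0:ℝ) 1)).real (Ioc x y) ≤ y - x :=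
    ENNReal.toReal_le_of_le_ofReal (sub_nonneg.2 hxy)
      ((Measure.restrict_le_self _).trans_eq Real.volume_Ioc)
  gcongr

theorem dist_le (h : IsAdmissiblePath M p q γ g) {x y : ℝ} (hx : x ∈ Icc (0:ℝ) 1)
    (hy : y ∈ Icc (0:ℝ) 1) : dist (γ x) (γ y) ≤ √(pathEnergy g) * √(dist x y) := by
  rcases le_total x y with hxy | hyx
  · rw [dist_comm (γ x), dist_comm x, dist_eq_norm, Real.dist_eq, abs_of_nonneg (sub_nonneg.2 hxy)]
    exact h.norm_sub_le_of_le hx hy hxy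
  · rw [dist_eq_norm, Real.dist_eq, abs_of_nonneg (sub_nonneg.2 hyx)]
    exact h.norm_sub_le_of_le hy hx hyx

end IsAdmissiblePath

end AdmissiblePath

theorem energy_sublevel_compact_general {m : ℕ} (M : Set (EuclideanSpace ℝ (Fin m)))
    (hMclosed : IsClosed M)
    (p q : EuclideanSpace ℝ (Fin m)) (c : ℝ) (hc : 0 ≤ c)
    (γ g : ℕ → ℝ → EuclideanSpace ℝ (Fin m))
    (hadm : ∀ k, IsAdmissiblePath M p q (γ k) (g k))
    (hE : ∀ k, pathEnergy (g k) ≤ c) :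
    ∃ (k : ℕ → ℕ) (γ₀ g₀ : ℝ → EuclideanSpace ℝ (Fin m)),
      StrictMono k ∧
      IsAdmissiblePath M p q γ₀ g₀ ∧
      TendstoUniformlyOn (fun j => γ (k j)) γ₀ atTop (Icc 0 1) ∧
      pathEnergy g₀ ≤ c := by
  -- needed by the instance `Lp.SecondCountableTopology`, which makes `L²` separable
  have : Fact ((2 : ℝ≥0∞) ≠ ∞) := ⟨ENNReal.ofNat_ne_top⟩
  have hG : ∀ k, ‖(hadm k).2.1.toLp (g k)‖ ≤ √c := fun k => by
    rw [← Real.sqrt_sq (norm_nonneg _), ← pathEnergy_eq_norm_toLp_sq]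
    exact Real.sqrt_le_sqrt (hE k)
  obtain ⟨G₀, hG₀, φ, hφ, hweak⟩ := exists_subseq_tendsto_inner hG
  set γ₀ : ℝ → EuclideanSpace ℝ (Fin m) := fun t => p + ∫ s in (0:ℝ)..t, G₀ s
  have hpt : ∀ t ∈ Icc (0:ℝ) 1, Tendsto (fun j => γ (φ j) t) atTop (𝓝 (γ₀ t)) := fun t ht => by
    simp only [(hadm _).eq_add_setIntegral_toLp ht, γ₀,
      intervalIntegral_eq_setIntegral_restrict_Icc _ le_rfl ht.1 ht.2]
    exact tendsto_const_nhds.add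
      (tendsto_setIntegral_of_tendsto_inner hweak measurableSet_Ioc (measure_ne_top _ _))
  have hmod : Tendsto (fun r => √c * √r) (𝓝 0) (𝓝 0) := by
    simpa using (Real.continuous_sqrt.tendsto 0).const_mul √c
  have hunif : TendstoUniformlyOn (fun j => γ (φ j)) γ₀ atTop (Icc 0 1) :=
    (equicontinuousOn_of_continuity_modulus _ hmod _ fun x hx y hy j =>
      ((hadm (φ j)).dist_le hx hy).trans (by gcongr; exact hE _)).tendstoUniformlyOn_of_tendsto
        isCompact_Icc hpt
  refine ⟨φ, γ₀, G₀, hφ, ⟨?_, Lp.memLp G₀, fun t _ => rfl, ?_, fun t ht => ?_⟩, hunif, ?_⟩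
  · exact hunif.continuousOn (Frequently.of_forall fun j => (hadm (φ j)).1)
  · refine tendsto_nhds_unique (hpt 1 (right_mem_Icc.2 zero_le_one)) ?_
    simpa only [(hadm _).2.2.2.1] using tendsto_const_nhds
  · exact hMclosed.mem_of_tendsto (hpt t ht)
      (Eventually.of_forall fun j => (hadm (φ j)).2.2.2.2 t ht)
  · rw [pathEnergy, integral_norm_sq_eq_norm_sq G₀, ← Real.sq_sqrt hc]
    gcongr

/-- Compactness of energy sublevels: from a sequence of admissible paths from `p` to `q` in a
nonempty closed set `M ⊆ ℝ^m` with energies bounded by `c`, one can extract a subsequence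
converging uniformly on `[0,1]` to an admissible path of energy at most `c`. -/
theorem energy_sublevel_compact {m : ℕ} (M : Set (EuclideanSpace ℝ (Fin m)))
    (hM : M.Nonempty) (hMclosed : IsClosed M)
    (p q : EuclideanSpace ℝ (Fin m)) (hp : p ∈ M) (hq : q ∈ M) (c : ℝ) (hc : 0 ≤ c)
    (γ g : ℕ → ℝ → EuclideanSpace ℝ (Fin m))
    (hadm : ∀ k, IsAdmissiblePath M p q (γ k) (g k))
    (hE : ∀ k, pathEnergy (g k) ≤ c) :
    ∃ (k : ℕ → ℕ) (γ₀ g₀ : ℝ → EuclideanSpace ℝ (Fin m)),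
      StrictMono k ∧
      IsAdmissiblePath M p q γ₀ g₀ ∧
      TendstoUniformlyOn (fun j => γ (k j)) γ₀ atTop (Icc 0 1) ∧
      pathEnergy g₀ ≤ c :=
  energy_sublevel_compact_general M hMclosed p q c hc γ g hadm hE
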